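/- Let N_n := Σ_{j=0}^{n−1} (−1)^{(n−1)j} τ_n^j as an operator on C^{⊗n}. Then for every n ≥ 1 one has N_{n+1} ∘ d^{CB}_n = d^{CH}_n ∘ N_n as linear maps C^{⊗n} → C^{⊗(n+1)}. -/

import Mathlib

open TensorProduct PiTensorProduct

noncomputable section

variable (k : Type) [Field k] (C : Type) [AddCommGroup C] [Module k C]

abbrev tpow (n : ℕ) : Type := ⨂[k] (_ : Fin n), C

variable {k C}

def tcast {m n : ℕ} (h : m = n) : tpow k C m ≃ₗ[k] tpow k C n :=
  PiTensorProduct.reindex k (fun _ => C) (finCongr h)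

def mulE (m n : ℕ) : (tpow k C m ⊗[k] tpow k C n) ≃ₗ[k] tpow k C (m + n) :=
  (PiTensorProduct.tmulEquiv k C).trans
    (PiTensorProduct.reindex k (fun _ => C) finSumFinEquiv)

def eC : C ≃ₗ[k] tpow k C 1 :=
  (PiTensorProduct.subsingletonEquiv (R := k) (s := fun _ : Fin 1 => C) (0 : Fin 1)).symm

def permAct {n : ℕ} (σ : Equiv.Perm (Fin n)) : tpow k C n ≃ₗ[k] tpow k C n :=
  PiTensorProduct.reindex k (fun _ => C) σ

def tauPow (n : ℕ) (j : ℤ) : tpow k C n ≃ₗ[k] tpow k C n :=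
  permAct ((finRotate n) ^ j)

def eps (n : ℕ) : tpow k C n →ₗ[k] tpow k C n :=
  ∑ σ : Equiv.Perm (Fin n),
    ((Equiv.Perm.sign σ : ℤ) : k) • (permAct σ).toLinearMap

variable (D : C →ₗ[k] C ⊗[k] C)

/-- Apply `D : C → C ⊗ C` to the factor in position `a` (0-indexed) of `C^{⊗(a+1+b)}`,
leaving the two outputs in positions `a`, `a+1`. -/
def insertAt (a b : ℕ) : tpow k C (a + 1 + b) →ₗ[k] tpow k C (a + 1 + b + 1) :=
  (tcast (show a + 1 + (1 + b) = a + 1 + b + 1 by omega)).toLinearMap ∘ₗ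
  (mulE (a + 1) (1 + b)).toLinearMap ∘ₗ
  (TensorProduct.map (mulE a 1).toLinearMap (mulE 1 b).toLinearMap) ∘ₗ
  (TensorProduct.map (TensorProduct.map LinearMap.id eC.toLinearMap)
      (TensorProduct.map eC.toLinearMap LinearMap.id)) ∘ₗ
  (TensorProduct.assoc k (tpow k C a ⊗[k] C) C (tpow k C b)).toLinearMap ∘ₗ
  (TensorProduct.map (TensorProduct.assoc k (tpow k C a) C C).symm.toLinearMap LinearMap.id) ∘ₗ
  (TensorProduct.map (TensorProduct.map LinearMap.id D) LinearMap.id) ∘ₗ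
  (TensorProduct.map (TensorProduct.map LinearMap.id eC.symm.toLinearMap) LinearMap.id) ∘ₗ
  (TensorProduct.map (mulE a 1).symm.toLinearMap LinearMap.id) ∘ₗ
  (mulE (a + 1) b).symm.toLinearMap

/-- `∂_j = id^{⊗j} ⊗ D ⊗ id^{⊗(n-1-j)} : C^{⊗n} → C^{⊗(n+1)}`. -/
def del {n : ℕ} (j : Fin n) : tpow k C n →ₗ[k] tpow k C (n + 1) :=
  (tcast (show (j : ℕ) + 1 + (n - 1 - (j : ℕ)) + 1 = n + 1 by
      have := j.isLt; omega)).toLinearMap ∘ₗ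
  insertAt D (j : ℕ) (n - 1 - (j : ℕ)) ∘ₗ
  (tcast (show n = (j : ℕ) + 1 + (n - 1 - (j : ℕ)) by
      have := j.isLt; omega)).toLinearMap

/-- The bar differential `d^{CB}_n = Σ_{j=0}^{n-1} (-1)^j ∂_j`. -/
def dCB (n : ℕ) : tpow k C n →ₗ[k] tpow k C (n + 1) :=
  ∑ j : Fin n, ((-1 : k) ^ (j : ℕ)) • del D j

/-- `∂_0`, defined as `0` when `n = 0`. -/
def del0 (n : ℕ) : tpow k C n →ₗ[k] tpow k C (n + 1) :=
  if h : 0 < n then del D (⟨0, h⟩ : Fin n) else 0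

/-- The Hochschild differential `d^{CH}_n = d^{CB}_n + (-1)^n τ_{n+1}⁻¹ ∘ ∂_0`. -/
def dCH (n : ℕ) : tpow k C n →ₗ[k] tpow k C (n + 1) :=
  dCB D n + ((-1 : k) ^ n) • ((tauPow (n + 1) (-1)).toLinearMap ∘ₗ del0 D n)

/-- Apply `D` at position `a` of `C^{⊗(a+1+b)}` and move the second output leg to the very end,
yielding a map `C^{⊗(a+1+b)} → C^{⊗(a+1+b)} ⊗ C`. -/
def coactAt (a b : ℕ) : tpow k C (a + 1 + b) →ₗ[k] tpow k C (a + 1 + b) ⊗[k] C :=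
  (TensorProduct.map (mulE (a + 1) b).toLinearMap LinearMap.id) ∘ₗ
  (TensorProduct.map (TensorProduct.map (mulE a 1).toLinearMap LinearMap.id) LinearMap.id) ∘ₗ
  (TensorProduct.map (TensorProduct.map (TensorProduct.map LinearMap.id eC.toLinearMap)
      LinearMap.id) LinearMap.id) ∘ₗ
  (TensorProduct.assoc k (tpow k C a ⊗[k] C) (tpow k C b) C).symm.toLinearMap ∘ₗ
  (TensorProduct.map LinearMap.id (TensorProduct.comm k C (tpow k C b)).toLinearMap) ∘ₗ
  (TensorProduct.assoc k (tpow k C a ⊗[k] C) C (tpow k C b)).toLinearMap ∘ₗ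
  (TensorProduct.map (TensorProduct.assoc k (tpow k C a) C C).symm.toLinearMap LinearMap.id) ∘ₗ
  (TensorProduct.map (TensorProduct.map LinearMap.id D) LinearMap.id) ∘ₗ
  (TensorProduct.map (TensorProduct.map LinearMap.id eC.symm.toLinearMap) LinearMap.id) ∘ₗ
  (TensorProduct.map (mulE a 1).symm.toLinearMap LinearMap.id) ∘ₗ
  (mulE (a + 1) b).symm.toLinearMap

/-- The diagonal coaction `ρ_n : C^{⊗n} → C^{⊗n} ⊗ C`,
`ρ_n(x¹⊗⋯⊗xⁿ) = Σ_j (x¹⊗⋯⊗(x^j)_{[1]}⊗⋯⊗xⁿ) ⊗ (x^j)_{[2]}` where `D x = x_{[1]} ⊗ x_{[2]}`. -/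
def coact (n : ℕ) : tpow k C n →ₗ[k] tpow k C n ⊗[k] C :=
  ∑ j : Fin n,
    (TensorProduct.map
      (tcast (show (j : ℕ) + 1 + (n - 1 - (j : ℕ)) = n by have := j.isLt; omega)).toLinearMap
      LinearMap.id) ∘ₗ
    coactAt D (j : ℕ) (n - 1 - (j : ℕ)) ∘ₗ
    (tcast (show n = (j : ℕ) + 1 + (n - 1 - (j : ℕ)) by have := j.isLt; omega)).toLinearMap

/-- The diagonal coaction with codomain `C^{⊗(n+1)}`. -/
def coactE (n : ℕ) : tpow k C n →ₗ[k] tpow k C (n + 1) :=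
  (mulE n 1).toLinearMap ∘ₗ (TensorProduct.map LinearMap.id eC.toLinearMap) ∘ₗ coact D n

/-- The Chevalley–Eilenberg summand `∂_j = ρ_{j+1} ⊗ id^{⊗(n-j-1)}` for `j : Fin n`. -/
def CEdel {n : ℕ} (j : Fin n) : tpow k C n →ₗ[k] tpow k C (n + 1) :=
  (tcast (show (j : ℕ) + 1 + 1 + (n - ((j : ℕ) + 1)) = n + 1 by
      have := j.isLt; omega)).toLinearMap ∘ₗ
  (mulE ((j : ℕ) + 1 + 1) (n - ((j : ℕ) + 1))).toLinearMap ∘ₗ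
  (TensorProduct.map (coactE D ((j : ℕ) + 1)) LinearMap.id) ∘ₗ
  (mulE ((j : ℕ) + 1) (n - ((j : ℕ) + 1))).symm.toLinearMap ∘ₗ
  (tcast (show n = (j : ℕ) + 1 + (n - ((j : ℕ) + 1)) by have := j.isLt; omega)).toLinearMap

/-- The Chevalley–Eilenberg–Leibniz differential
`d^{CE}_n = Σ_{j=1}^n (-1)^{j-1} (ρ_j ⊗ id^{⊗(n-j)})`. -/
def dCE (n : ℕ) : tpow k C n →ₗ[k] tpow k C (n + 1) :=
  ∑ j : Fin n, ((-1 : k) ^ (j : ℕ)) • CEdel D j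

/-- Extend `f : C^{⊗n} → C^{⊗m}` to `f ⊗ id : C^{⊗(n+1)} → C^{⊗(m+1)}`
acting on the first factors. -/
def extLast {n m : ℕ} (f : tpow k C n →ₗ[k] tpow k C m) :
    tpow k C (n + 1) →ₗ[k] tpow k C (m + 1) :=
  (mulE m 1).toLinearMap ∘ₗ (TensorProduct.map f LinearMap.id) ∘ₗ (mulE n 1).symm.toLinearMap

/-- Apply `f` to the `m` middle factors (positions `p+1,…,p+m`) of `C^{⊗(p+m+r)}`. -/
def midOp (p m r : ℕ) (f : tpow k C m →ₗ[k] tpow k C m) :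
    tpow k C (p + m + r) →ₗ[k] tpow k C (p + m + r) :=
  (mulE (p + m) r).toLinearMap ∘ₗ
  (TensorProduct.map
    ((mulE p m).toLinearMap ∘ₗ (TensorProduct.map LinearMap.id f) ∘ₗ
      (mulE p m).symm.toLinearMap)
    LinearMap.id) ∘ₗ
  (mulE (p + m) r).symm.toLinearMap

/-- `ε_n ⊗ id : C^{⊗(n+1)} → C^{⊗(n+1)}`, antisymmetrizing the first `n` factors. -/
def epsHead (n : ℕ) : tpow k C (n + 1) →ₗ[k] tpow k C (n + 1) :=
  ∑ σ : Equiv.Perm (Fin n),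
    ((Equiv.Perm.sign σ : ℤ) : k) •
      (permAct (finSumFinEquiv.permCongr (Equiv.sumCongr σ (Equiv.refl (Fin 1))))).toLinearMap

/-- `id ⊗ ε_m : C^{⊗(m+1)} → C^{⊗(m+1)}`, antisymmetrizing the last `m` factors. -/
def epsTail (m : ℕ) : tpow k C (m + 1) →ₗ[k] tpow k C (m + 1) :=
  ∑ σ : Equiv.Perm (Fin m),
    ((Equiv.Perm.sign σ : ℤ) : k) •
      (permAct ((finCongr (show 1 + m = m + 1 by omega)).permCongr
        (finSumFinEquiv.permCongr (Equiv.sumCongr (Equiv.refl (Fin 1)) σ)))).toLinearMap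

/-- The permutation of `Fin (n+1)` which moves the factor in position `j` to the end,
shifting the later ones down (as a reindexing function, it is the cycle rotating
positions `j,…,n`). -/
def moveEndPerm (n : ℕ) (j : Fin (n + 1)) : Equiv.Perm (Fin (n + 1)) :=
  (finCongr (show (j : ℕ) + (n + 1 - (j : ℕ)) = n + 1 by have := j.isLt; omega)).permCongr
    (finSumFinEquiv.permCongr
      (Equiv.sumCongr (Equiv.refl (Fin (j : ℕ))) (finRotate (n + 1 - (j : ℕ)))))

/-- The contracting homotopy `h_{n+1} : C^{⊗(n+1)} → C^{⊗n} ⊗ C`,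
`h(x¹⊗⋯⊗x^{n+1}) = Σ_j (-1)^j (x¹⊗⋯⊗\hat{x^j}⊗⋯⊗x^{n+1}) ⊗ x^j`. -/
def hBar (n : ℕ) : tpow k C (n + 1) →ₗ[k] tpow k C n ⊗[k] C :=
  ∑ j : Fin (n + 1), ((-1 : k) ^ ((j : ℕ) + 1)) •
    ((TensorProduct.map LinearMap.id eC.symm.toLinearMap) ∘ₗ
      (mulE n 1).symm.toLinearMap ∘ₗ (permAct (moveEndPerm n j)⁻¹).toLinearMap)

/-- The contracting homotopy as an operator on `C^{⊗(n+1)}`. -/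
def hOp (n : ℕ) : tpow k C (n + 1) →ₗ[k] tpow k C (n + 1) :=
  ∑ j : Fin (n + 1), ((-1 : k) ^ ((j : ℕ) + 1)) • (permAct (moveEndPerm n j)⁻¹).toLinearMap

/-- The norm operator `N_n = Σ_{j=0}^{n-1} (-1)^{(n-1)j} τ_n^j`. -/
def Nop (n : ℕ) : tpow k C n →ₗ[k] tpow k C n :=
  ∑ j : Fin n, ((-1 : k) ^ ((n - 1) * (j : ℕ))) • (tauPow n (j : ℕ)).toLinearMap

/-- `t_n = id - (-1)^{n-1} τ_n⁻¹`. -/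
def tOp (n : ℕ) : tpow k C n →ₗ[k] tpow k C n :=
  LinearMap.id - ((-1 : k) ^ (n - 1)) • (tauPow n (-1)).toLinearMap


/-- `i_n = (-1)^{n+1} · id`. -/
def iCE (n : ℕ) : tpow k C n →ₗ[k] tpow k C n :=
  ((-1 : k) ^ (n + 1)) • LinearMap.id

end

/-- The cobracket `δ = (id - τ) ∘ Δ` of the Lie coalgebra `Lie(C)`. -/
noncomputable def lieD {k : Type} [Field k] {C : Type} [AddCommGroup C] [Module k C]
    (Δ : C →ₗ[k] C ⊗[k] C) : C →ₗ[k] C ⊗[k] C :=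
  (LinearMap.id - (TensorProduct.comm k C C).toLinearMap) ∘ₗ Δ

/-!
Each coface is a rotated copy of the first one, `∂_j = τ_{n+1}^j ∂_0 τ_n^{-j}`, as one checks on
pure tensors. Hence both `N_{n+1} ∘ d^{CB}_n` and `d^{CH}_n ∘ N_n` expand into sums of the terms
`s(a, b) = (-1)^{n a + (n-1) b} τ_{n+1}^a ∂_0 τ_n^b`, which are `(n+1)`-periodic in `a` and
`n`-periodic in `b`. Shifting and reflecting these periodic sums turns both sides into
`∑_{0 ≤ a ≤ n} ∑_{0 ≤ b < n} s(a, b)`; on the right, the extra summand `(-1)^n τ_{n+1}^{-1} ∂_0 N_n`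
of `d^{CH}_n` is the row `a = -1 ≡ n`.
-/

theorem Fin.append_apply_eq_dite {α : Type*} {m n : ℕ} (p : Fin m → α) (q : Fin n → α)
    (i : Fin (m + n)) :
    Fin.append p q i =
      if h : (i : ℕ) < m then p ⟨i, h⟩ else q ⟨(i : ℕ) - m, by omega⟩ := by
  split_ifs with h
  · exact Fin.append_left p q ⟨i, h⟩
  · convert Fin.append_right p q ⟨(i : ℕ) - m, by omega⟩ using 2
    ext
    simp
    omega

section PureTensors

variable {k : Type} [Field k] {C : Type} [AddCommGroup C] [Module k C]

theorem permAct_tprod {n : ℕ} (σ : Equiv.Perm (Fin n)) (x : Fin n → C) :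
    permAct (k := k) σ (tprod k x) = tprod k (x ∘ σ.symm) :=
  reindex_tprod σ x

theorem tcast_tprod {m n : ℕ} (h : m = n) (x : Fin m → C) :
    tcast (k := k) h (tprod k x) = tprod k (x ∘ Fin.cast h.symm) :=
  reindex_tprod _ x

theorem mulE_tprod (m n : ℕ) (x : Fin m → C) (y : Fin n → C) :
    mulE (k := k) m n (tprod k x ⊗ₜ[k] tprod k y) = tprod k (Fin.append x y) := by
  rw [mulE, LinearEquiv.trans_apply, tmulEquiv_apply, reindex_tprod]
  congr 1
  ext i
  refine Fin.addCases (fun i => ?_) (fun i => ?_) i <;> simp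

theorem mulE_symm_tprod (m n : ℕ) (z : Fin (m + n) → C) :
    (mulE (k := k) m n).symm (tprod k z) =
      tprod k (z ∘ Fin.castAdd n) ⊗ₜ[k] tprod k (z ∘ Fin.natAdd m) := by
  rw [LinearEquiv.symm_apply_eq, mulE_tprod]
  exact congrArg _ Fin.append_castAdd_natAdd.symm

theorem eC_apply (c : C) : eC (k := k) c = tprod k (fun _ : Fin 1 => c) := by
  simp [eC]

theorem eC_symm_tprod (x : Fin 1 → C) : (eC (k := k)).symm (tprod k x) = x 0 := by
  simp [eC]

theorem permAct_mul {n : ℕ} (σ ρ : Equiv.Perm (Fin n)) :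
    permAct (k := k) (C := C) (σ * ρ) = (permAct ρ).trans (permAct σ) :=
  (reindex_trans _ _).symm

theorem tauPow_zero (n : ℕ) : tauPow (k := k) (C := C) n 0 = LinearEquiv.refl k _ :=
  reindex_refl

theorem tauPow_comp_tauPow (n : ℕ) (a b : ℤ) :
    (tauPow (k := k) (C := C) n a).toLinearMap ∘ₗ (tauPow n b).toLinearMap =
      (tauPow n (a + b)).toLinearMap := by
  rw [tauPow, tauPow, tauPow, zpow_add, permAct_mul, LinearEquiv.coe_trans]

open Fin.NatCast Fin.CommRing in
theorem finRotate_succ_pow_apply (n m : ℕ) (i : Fin (n + 1)) :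
    (finRotate (n + 1) ^ m) i = i + m := by
  induction m with
  | zero => simp
  | succ m ih =>
    rw [pow_succ', Equiv.Perm.mul_apply, ih, finRotate_apply, Nat.cast_succ, add_assoc]

theorem finRotate_pow_self (n : ℕ) : finRotate n ^ n = 1 := by
  rcases n with _ | n
  · rfl
  · ext i
    rw [finRotate_succ_pow_apply]
    simp

theorem tauPow_add_self (n : ℕ) (a : ℤ) :
    tauPow (k := k) (C := C) n (a + n) = tauPow n a := by
  rw [tauPow, tauPow, zpow_add, zpow_natCast, finRotate_pow_self, mul_one]

end PureTensors

section Coface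

variable {k : Type} [Field k] {C : Type} [AddCommGroup C] [Module k C] (D : C →ₗ[k] C ⊗[k] C)

/-- The tail of `insertAt D a b` evaluated at `tprod (f, c, g)`, as a linear function of `D c`. -/
def sandwich (a b : ℕ) (f : Fin a → C) (g : Fin b → C) :
    C ⊗[k] C →ₗ[k] tpow k C (a + 1 + b + 1) :=
  (tcast (show a + 1 + (1 + b) = a + 1 + b + 1 by omega)).toLinearMap ∘ₗ
  (mulE (a + 1) (1 + b)).toLinearMap ∘ₗ
  (TensorProduct.map (mulE a 1).toLinearMap (mulE 1 b).toLinearMap) ∘ₗ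
  (TensorProduct.map (TensorProduct.map LinearMap.id eC.toLinearMap)
      (TensorProduct.map eC.toLinearMap LinearMap.id)) ∘ₗ
  (TensorProduct.assoc k (tpow k C a ⊗[k] C) C (tpow k C b)).toLinearMap ∘ₗ
  (TensorProduct.map (TensorProduct.assoc k (tpow k C a) C C).symm.toLinearMap LinearMap.id) ∘ₗ
  (TensorProduct.mk k (tpow k C a ⊗[k] (C ⊗[k] C)) (tpow k C b)).flip (tprod k g) ∘ₗ
  TensorProduct.mk k (tpow k C a) (C ⊗[k] C) (tprod k f)

theorem insertAt_tprod (a b : ℕ) (x : Fin (a + 1 + b) → C) :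
    insertAt D a b (tprod k x) =
      sandwich a b (fun i => x ⟨i, by omega⟩) (fun i => x ⟨a + 1 + i, by omega⟩)
        (D (x ⟨a, by omega⟩)) := by
  simp only [insertAt, sandwich, LinearMap.comp_apply, LinearEquiv.coe_coe, mulE_symm_tprod,
    TensorProduct.map_tmul, LinearMap.id_apply, eC_symm_tprod, TensorProduct.mk_apply,
    LinearMap.flip_apply]
  rfl

theorem sandwich_tmul (a b : ℕ) (f : Fin a → C) (g : Fin b → C) (u v : C) :
    sandwich (k := k) a b f g (u ⊗ₜ v) =
      tprod k (fun i : Fin (a + 1 + b + 1) =>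
        if h : (i : ℕ) < a then f ⟨i, h⟩
        else if h' : (i : ℕ) = a then u
        else if h'' : (i : ℕ) = a + 1 then v
        else g ⟨(i : ℕ) - (a + 2), by omega⟩) := by
  simp only [sandwich, LinearMap.comp_apply, TensorProduct.mk_apply, LinearMap.flip_apply,
    LinearEquiv.coe_coe, TensorProduct.map_tmul, TensorProduct.assoc_symm_tmul,
    TensorProduct.assoc_tmul, LinearMap.id_apply, eC_apply, mulE_tprod, tcast_tprod]
  congr 1
  funext i
  simp only [Function.comp_apply, Fin.append_apply_eq_dite, Fin.val_cast]
  split_ifs <;> first | rfl | omega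

def spliceFun {n : ℕ} (j : Fin n) (x : Fin n → C) (u v : C) : Fin (n + 1) → C :=
  fun i => if h : (i : ℕ) < j then x ⟨i, by omega⟩
    else if (i : ℕ) = j then u
    else if (i : ℕ) = j + 1 then v
    else x ⟨(i : ℕ) - 1, by omega⟩

def spliceMap {n : ℕ} (j : Fin n) (x : Fin n → C) : C ⊗[k] C →ₗ[k] tpow k C (n + 1) :=
  (tcast (show (j : ℕ) + 1 + (n - 1 - j) + 1 = n + 1 by omega)).toLinearMap ∘ₗ
    sandwich j (n - 1 - j) (fun i => x ⟨i, by omega⟩) (fun i => x ⟨j + 1 + i, by omega⟩)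

theorem spliceMap_tmul {n : ℕ} (j : Fin n) (x : Fin n → C) (u v : C) :
    spliceMap (k := k) j x (u ⊗ₜ v) = tprod k (spliceFun j x u v) := by
  rw [spliceMap, LinearMap.comp_apply, LinearEquiv.coe_coe, sandwich_tmul, tcast_tprod]
  congr 1
  funext i
  simp only [spliceFun, Function.comp_apply, Fin.val_cast]
  split_ifs <;> first | rfl | omega | exact congrArg x (Fin.ext (by simp; omega))

theorem del_tprod {n : ℕ} (j : Fin n) (x : Fin n → C) :
    del D j (tprod k x) = spliceMap j x (D (x j)) := by
  simp only [del, spliceMap, LinearMap.comp_apply, LinearEquiv.coe_coe, tcast_tprod,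
    insertAt_tprod]
  rfl

theorem del_succ_comp_tauPow_one {n j : ℕ} (h : j + 1 < n) :
    del D ⟨j + 1, h⟩ ∘ₗ (tauPow n 1).toLinearMap =
      (tauPow (n + 1) 1).toLinearMap ∘ₗ del D ⟨j, by omega⟩ := by
  obtain ⟨m, rfl⟩ : ∃ m, n = m + 1 := ⟨n - 1, by omega⟩
  ext y
  obtain ⟨x, rfl⟩ : ∃ x, y = x ∘ finRotate (m + 1) :=
    ⟨y ∘ (finRotate (m + 1)).symm, by simp [Function.comp_assoc]⟩
  have hj : (x ∘ finRotate (m + 1)) ⟨j, by omega⟩ = x ⟨j + 1, h⟩ := by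
    simp [finRotate_of_lt (show j < m by omega)]
  simp only [LinearMap.compMultilinearMap_apply, LinearMap.comp_apply, LinearEquiv.coe_coe,
    tauPow, zpow_one, permAct_tprod, Function.comp_assoc, Equiv.self_comp_symm,
    Function.comp_id, del_tprod, hj]
  have key : spliceMap (k := k) ⟨j + 1, h⟩ x =
      (permAct (finRotate (m + 1 + 1))).toLinearMap ∘ₗ
        spliceMap ⟨j, by omega⟩ (x ∘ finRotate _) := by
    refine TensorProduct.ext' fun u v => ?_
    rw [LinearMap.comp_apply, LinearEquiv.coe_coe, spliceMap_tmul, spliceMap_tmul, permAct_tprod]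
    congr 1
    rw [Equiv.eq_comp_symm]
    funext i
    have hv : (finRotate (m + 1 + 1) i : ℕ) = if (i : ℕ) = m + 1 then 0 else (i : ℕ) + 1 := by
      rw [coe_finRotate]
      simp [Fin.ext_iff]
    simp only [spliceFun, Function.comp_apply]
    split_ifs at hv ⊢ <;>
      first
      | rfl
      | omega
      | (congr 1; ext; simp only [coe_finRotate, Fin.ext_iff, Fin.val_last]; split_ifs <;> omega)
  rw [key]
  rfl

theorem del_eq_tauPow_conj {n : ℕ} (j : Fin n) :
    del D j = (tauPow (n + 1) j).toLinearMap ∘ₗ del0 D n ∘ₗ (tauPow n (-j)).toLinearMap := by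
  obtain ⟨j, hj⟩ := j
  induction j with
  | zero => simp [del0, hj, tauPow_zero]
  | succ j ih =>
    calc del D ⟨j + 1, hj⟩
        = del D ⟨j + 1, hj⟩ ∘ₗ (tauPow n 1).toLinearMap ∘ₗ (tauPow n (-1)).toLinearMap := by
          rw [tauPow_comp_tauPow, add_neg_cancel, tauPow_zero]; rfl
      _ = (tauPow (n + 1) 1).toLinearMap ∘ₗ del D ⟨j, by omega⟩ ∘ₗ (tauPow n (-1)).toLinearMap := by
          rw [← LinearMap.comp_assoc, del_succ_comp_tauPow_one, LinearMap.comp_assoc]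
      _ = _ := by
          rw [ih, LinearMap.comp_assoc, LinearMap.comp_assoc, tauPow_comp_tauPow,
            ← LinearMap.comp_assoc, tauPow_comp_tauPow]
          push_cast
          ring_nf

end Coface

section PeriodicSums

open Finset

variable {M : Type*} [AddCancelCommMonoid M]

theorem Finset.sum_range_succ_comp_eq_of_eq {n : ℕ} {h : ℕ → M} (hn : h n = h 0) :
    ∑ j ∈ range n, h (j + 1) = ∑ j ∈ range n, h j := by
  have := (sum_range_succ' h n).symm.trans (sum_range_succ h n)
  rwa [hn, add_left_inj] at this

theorem Function.Periodic.sum_range_add {f : ℤ → M} {n : ℕ} (hf : Periodic f n) (c : ℤ) :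
    ∑ j ∈ range n, f (j + c) = ∑ j ∈ range n, f j := by
  induction c using Int.induction_on with
  | zero => simp
  | succ c ih =>
    rw [← ih, ← Finset.sum_range_succ_comp_eq_of_eq (h := fun j : ℕ => f (j + c))]
    · exact sum_congr rfl fun j _ => congrArg f (by push_cast; ring)
    · simpa [add_comm] using hf c
  | pred c ih =>
    rw [← ih, ← Finset.sum_range_succ_comp_eq_of_eq (h := fun j : ℕ => f (j + (-c - 1)))]
    · exact sum_congr rfl fun j _ => congrArg f (by push_cast; ring)
    · simpa [add_comm] using hf (-c - 1)

theorem Function.Periodic.sum_range_neg {f : ℤ → M} {n : ℕ} (hf : Periodic f n) :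
    ∑ j ∈ range n, f (-j) = ∑ j ∈ range n, f j := by
  rw [← sum_range_reflect, ← hf.sum_range_add (1 - n)]
  refine sum_congr rfl fun j hj => ?_
  rw [mem_range] at hj
  congr 1
  omega

end PeriodicSums

theorem neg_one_zpow_eq_of_even_sub {α : Type*} [DivisionMonoid α] [HasDistribNeg α] {a b : ℤ}
    (h : Even (a - b)) : (-1 : α) ^ a = (-1) ^ b := by
  simp only [neg_one_zpow_eq_ite, Int.even_sub.mp h]

section LinearMapSums

open Finset

variable {R M N P ι : Type*} [Semiring R] [AddCommMonoid M] [AddCommMonoid N]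
  [AddCommMonoid P] [Module R M] [Module R N] [Module R P]

theorem LinearMap.sum_comp (s : Finset ι) (f : ι → N →ₗ[R] P) (g : M →ₗ[R] N) :
    (∑ i ∈ s, f i) ∘ₗ g = ∑ i ∈ s, f i ∘ₗ g := by
  ext; simp

theorem LinearMap.comp_sum (s : Finset ι) (f : N →ₗ[R] P) (g : ι → M →ₗ[R] N) :
    f ∘ₗ (∑ i ∈ s, g i) = ∑ i ∈ s, f ∘ₗ g i := by
  ext; simp

end LinearMapSums

section NormOperator

open Finset

variable {k : Type} [Field k] {C : Type} [AddCommGroup C] [Module k C] (D : C →ₗ[k] C ⊗[k] C)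

def signedRotDel0 (n : ℕ) (a b : ℤ) : tpow k C n →ₗ[k] tpow k C (n + 1) :=
  (-1 : k) ^ ((n : ℤ) * a + ((n : ℤ) - 1) * b) •
    ((tauPow (n + 1) a).toLinearMap ∘ₗ del0 D n ∘ₗ (tauPow n b).toLinearMap)

theorem periodic_signedRotDel0_left (n : ℕ) (b : ℤ) :
    Function.Periodic (fun a => signedRotDel0 (k := k) D n a b) ((n + 1 : ℕ) : ℤ) := by
  intro a
  simp only [signedRotDel0]
  rw [tauPow_add_self, neg_one_zpow_eq_of_even_sub]
  convert Int.even_mul_succ_self n using 1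
  push_cast
  ring

theorem periodic_signedRotDel0_right (n : ℕ) (a : ℤ) :
    Function.Periodic (fun b => signedRotDel0 (k := k) D n a b) n := by
  intro b
  simp only [signedRotDel0]
  rw [tauPow_add_self (n := n), neg_one_zpow_eq_of_even_sub]
  convert Int.even_mul_succ_self (n - 1) using 1
  ring

theorem Nop_comp_dCB (n : ℕ) :
    Nop (n + 1) ∘ₗ dCB D n =
      ∑ a ∈ range (n + 1), ∑ b ∈ range n, signedRotDel0 (k := k) D n a b := by
  have hterm (i : Fin (n + 1)) (j : Fin n) :
      (((-1 : k) ^ ((n + 1 - 1) * (i : ℕ))) • (tauPow (n + 1) (i : ℕ)).toLinearMap) ∘ₗ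
        (((-1 : k) ^ (j : ℕ)) • del D j) = signedRotDel0 D n ((i : ℕ) + (j : ℕ)) (-(j : ℕ)) := by
    rw [del_eq_tauPow_conj, LinearMap.smul_comp, LinearMap.comp_smul, smul_smul,
      ← LinearMap.comp_assoc, tauPow_comp_tauPow, signedRotDel0, Nat.add_sub_cancel,
      ← zpow_natCast, ← zpow_natCast, ← zpow_add₀ (by norm_num)]
    congr 2
    push_cast
    ring
  calc Nop (n + 1) ∘ₗ dCB D n
      = ∑ i : Fin (n + 1), ∑ j : Fin n, signedRotDel0 D n ((i : ℕ) + (j : ℕ)) (-(j : ℕ)) := by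
        rw [Nop, dCB, LinearMap.sum_comp]
        simp only [LinearMap.comp_sum, hterm]
    _ = ∑ i ∈ range (n + 1), ∑ j ∈ range n, signedRotDel0 D n (i + j) (-j) := by
        rw [Fin.sum_univ_eq_sum_range
          (fun i : ℕ => ∑ j : Fin n, signedRotDel0 D n (i + (j : ℕ)) (-(j : ℕ)))]
        exact sum_congr rfl fun i _ =>
          Fin.sum_univ_eq_sum_range (fun j : ℕ => signedRotDel0 D n (i + j) (-j)) n
    _ = ∑ j ∈ range n, ∑ i ∈ range (n + 1), signedRotDel0 D n (i + j) (-j) := sum_comm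
    _ = ∑ j ∈ range n, ∑ i ∈ range (n + 1), signedRotDel0 D n i (-j) :=
        sum_congr rfl fun j _ => (periodic_signedRotDel0_left D n _).sum_range_add j
    _ = ∑ i ∈ range (n + 1), ∑ j ∈ range n, signedRotDel0 D n i (-j) := sum_comm
    _ = _ := sum_congr rfl fun i _ => (periodic_signedRotDel0_right D n i).sum_range_neg

theorem dCB_comp_Nop {n : ℕ} (hn : 1 ≤ n) :
    dCB D n ∘ₗ Nop n = ∑ a ∈ range n, ∑ b ∈ range n, signedRotDel0 (k := k) D n a b := by
  have hterm (j l : Fin n) :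
      (((-1 : k) ^ (j : ℕ)) • del D j) ∘ₗ
        (((-1 : k) ^ ((n - 1) * (l : ℕ))) • (tauPow n (l : ℕ)).toLinearMap) =
        signedRotDel0 D n (j : ℕ) ((l : ℕ) + -(j : ℕ)) := by
    rw [del_eq_tauPow_conj, LinearMap.smul_comp, LinearMap.comp_smul, smul_smul,
      LinearMap.comp_assoc, LinearMap.comp_assoc, tauPow_comp_tauPow, signedRotDel0,
      ← zpow_natCast, ← zpow_natCast, ← zpow_add₀ (by norm_num)]
    congr 2
    · push_cast [Nat.cast_sub hn]
      ring
    · ring_nf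
  calc dCB D n ∘ₗ Nop n
      = ∑ j : Fin n, ∑ l : Fin n, signedRotDel0 D n (j : ℕ) ((l : ℕ) + -(j : ℕ)) := by
        rw [dCB, Nop, LinearMap.sum_comp]
        simp only [LinearMap.comp_sum, hterm]
    _ = ∑ j ∈ range n, ∑ l ∈ range n, signedRotDel0 D n j (l + -j) := by
        rw [Fin.sum_univ_eq_sum_range
          (fun j : ℕ => ∑ l : Fin n, signedRotDel0 D n j ((l : ℕ) + -(j : ℤ)))]
        exact sum_congr rfl fun j _ =>
          Fin.sum_univ_eq_sum_range (fun l : ℕ => signedRotDel0 D n j (l + -j)) n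
    _ = _ := sum_congr rfl fun j _ => (periodic_signedRotDel0_right D n j).sum_range_add _

theorem dCH_comp_Nop {n : ℕ} (hn : 1 ≤ n) :
    dCH D n ∘ₗ Nop n =
      ∑ a ∈ range (n + 1), ∑ b ∈ range n, signedRotDel0 (k := k) D n a b := by
  have hterm (l : Fin n) :
      (-1 : k) ^ n • (((tauPow (n + 1) (-1)).toLinearMap ∘ₗ del0 D n) ∘ₗ
        (((-1 : k) ^ ((n - 1) * (l : ℕ))) • (tauPow n (l : ℕ)).toLinearMap)) =
        signedRotDel0 D n (-1) (l : ℕ) := by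
    rw [LinearMap.comp_smul, signedRotDel0, smul_smul, LinearMap.comp_assoc,
      ← zpow_natCast, ← zpow_natCast, ← zpow_add₀ (by norm_num)]
    congr 1
    apply neg_one_zpow_eq_of_even_sub
    exact ⟨n, by push_cast [Nat.cast_sub hn]; ring⟩
  rw [dCH, LinearMap.add_comp, LinearMap.smul_comp, sum_range_succ, dCB_comp_Nop D hn, Nop,
    LinearMap.comp_sum, smul_sum]
  simp only [hterm]
  rw [Fin.sum_univ_eq_sum_range (fun l : ℕ => signedRotDel0 D n (-1) l)]
  congr 1
  refine sum_congr rfl fun b _ => ?_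
  refine (periodic_signedRotDel0_left D n b (-1)).symm.trans ?_
  congr 1
  push_cast
  ring

end NormOperator

theorem statement_general (k : Type) [Field k]
    (C : Type) [AddCommGroup C] [Module k C]
    (Δ : C →ₗ[k] C ⊗[k] C) :
    ∀ n : ℕ, 1 ≤ n → Nop (n + 1) ∘ₗ dCB Δ n = dCH Δ n ∘ₗ Nop n := by
  intro n hn
  rw [Nop_comp_dCB, dCH_comp_Nop Δ hn]

theorem statement (k : Type) [Field k] [CharZero k]
    (C : Type) [AddCommGroup C] [Module k C]
    (Δ : C →ₗ[k] C ⊗[k] C) (η : C →ₗ[k] k)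
    (hcoassoc : (TensorProduct.assoc k C C C).toLinearMap ∘ₗ
        (TensorProduct.map Δ LinearMap.id) ∘ₗ Δ
      = (TensorProduct.map LinearMap.id Δ) ∘ₗ Δ)
    (hcounitL : (TensorProduct.lid k C).toLinearMap ∘ₗ
        (TensorProduct.map η LinearMap.id) ∘ₗ Δ = LinearMap.id)
    (hcounitR : (TensorProduct.rid k C).toLinearMap ∘ₗ
        (TensorProduct.map LinearMap.id η) ∘ₗ Δ = LinearMap.id) :
    ∀ n : ℕ, 1 ≤ n → Nop (n + 1) ∘ₗ dCB Δ n = dCH Δ n ∘ₗ Nop n :=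
  statement_general k C Δ
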